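/- Every edge xy of the dodecahedral graph satisfies W_1(μ_x^{1/4}, μ_y^{1/4}) = 1, i.e. κ_{1/4}(x,y) = 0; hence the dodecahedral graph is Ricci-flat. -/

import Mathlib

open scoped ENNReal

namespace RicciFlatCubic

variable {V : Type*}

/-- The probability measure `μ_x^p` on the vertex set: mass `p` at `x`,
mass `(1-p)/deg x` at each neighbor of `x`, and `0` elsewhere. -/
noncomputable def muMeasure (G : SimpleGraph V) [G.LocallyFinite] (p : ℝ≥0∞) (x : V) :
    V → ℝ≥0∞ := fun z =>
  haveI : DecidableEq V := Classical.decEq V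
  haveI : Decidable (G.Adj x z) := Classical.dec _
  if z = x then p
  else if G.Adj x z then (1 - p) / (G.degree x : ℝ≥0∞)
  else 0

/-- `π : V × V → [0,1]` is a transport plan from `μ₁` to `μ₂` if its marginals are `μ₁`, `μ₂`. -/
def IsTransportPlan (μ₁ μ₂ : V → ℝ≥0∞) (π : V → V → ℝ≥0∞) : Prop :=
  (∀ u v, π u v ≤ 1) ∧ (∀ u, ∑' v, π u v = μ₁ u) ∧ (∀ v, ∑' u, π u v = μ₂ v)

/-- The Wasserstein distance `W₁(μ₁, μ₂)`: the infimum over all transport plans of the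
transport cost `∑ d(u,v) π(u,v)`, where `d` is the shortest-path distance in `G`. -/
noncomputable def W1 (G : SimpleGraph V) (μ₁ μ₂ : V → ℝ≥0∞) : ℝ≥0∞ :=
  ⨅ π : {π : V → V → ℝ≥0∞ // IsTransportPlan μ₁ μ₂ π},
    ∑' q : V × V, (G.dist q.1 q.2 : ℝ≥0∞) * π.1 q.1 q.2

/-- The `p`-Ollivier-Ricci curvature `κ_p(x,y) = 1 - W₁(μ_x^p, μ_y^p)` (as a real number),
for a real idleness parameter `p`. -/
noncomputable def kappa (G : SimpleGraph V) [G.LocallyFinite] (p : ℝ) (x y : V) : ℝ :=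
  1 - (W1 G (muMeasure G (ENNReal.ofReal p) x) (muMeasure G (ENNReal.ofReal p) y)).toReal

/-- The edge `xy` lies on two 5-cycles whose vertex sets intersect exactly in `{x, y}`. -/
def TwoPentagons (G : SimpleGraph V) (x y : V) : Prop :=
  ∃ P₁ P₂ : G.Walk x x, P₁.IsCycle ∧ P₂.IsCycle ∧ P₁.length = 5 ∧ P₂.length = 5 ∧
    s(x, y) ∈ P₁.edges ∧ s(x, y) ∈ P₂.edges ∧
    {v | v ∈ P₁.support} ∩ {v | v ∈ P₂.support} = {x, y}

/-- The Petersen graph as the Kneser graph `K(5,2)`. -/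
def petersen : SimpleGraph {s : Finset (Fin 5) // s.card = 2} where
  Adj a b := Disjoint a.1 b.1
  symm := ⟨fun _ _ h => h.symm⟩
  loopless := ⟨by
    rintro ⟨s, hs⟩ h
    rw [disjoint_self] at h
    simp only [Finset.bot_eq_empty] at h
    simp [h] at hs⟩

/-- The Triplex: a 12-cycle on `ℤ/12ℤ` together with six chords. -/
def triplex : SimpleGraph (ZMod 12) :=
  SimpleGraph.fromRel fun i j =>
    j = i + 1 ∨ (i = 1 ∧ j = 7) ∨ (i = 2 ∧ j = 10) ∨ (i = 3 ∧ j = 8) ∨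
      (i = 4 ∧ j = 12) ∨ (i = 5 ∧ j = 9) ∨ (i = 6 ∧ j = 11)

/-- The dodecahedral graph: layer `0` is the outer 5-cycle `a`, layers `1`, `2` form the
middle 10-cycle `b₁ c₁ b₂ c₂ … b₅ c₅`, layer `3` is the inner 5-cycle `d`. -/
def dodecahedral : SimpleGraph (Fin 4 × ZMod 5) :=
  SimpleGraph.fromRel fun p q =>
    (p.1 = 0 ∧ q.1 = 0 ∧ q.2 = p.2 + 1) ∨
    (p.1 = 0 ∧ q.1 = 1 ∧ q.2 = p.2) ∨
    (p.1 = 1 ∧ q.1 = 2 ∧ q.2 = p.2) ∨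
    (p.1 = 2 ∧ q.1 = 1 ∧ q.2 = p.2 + 1) ∨
    (p.1 = 2 ∧ q.1 = 3 ∧ q.2 = p.2) ∨
    (p.1 = 3 ∧ q.1 = 3 ∧ q.2 = p.2 + 1)

/-- The half-dodecahedral graph: inner 5-cycle `y` (`Sum.inl`), outer 10-cycle `x`
(`Sum.inr`), and spokes `yᵢ ~ x_{2i-1}`. -/
def halfDodecahedral : SimpleGraph (ZMod 5 ⊕ ZMod 10) :=
  SimpleGraph.fromRel fun p q =>
    (∃ i : ZMod 5, p = Sum.inl i ∧ q = Sum.inl (i + 1)) ∨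
    (∃ j : ZMod 10, p = Sum.inr j ∧ q = Sum.inr (j + 1)) ∨
    (∃ i : ZMod 5, p = Sum.inl i ∧ q = Sum.inr (2 * (i.val : ZMod 10) - 1))

/-- The two-sided infinite path on `ℤ`. -/
def infinitePath : SimpleGraph ℤ := SimpleGraph.fromRel fun i j => j = i + 1

/-- The cycle `Cₙ` on `ℤ/nℤ`. -/
def cycleZMod (n : ℕ) : SimpleGraph (ZMod n) := SimpleGraph.fromRel fun i j => j = i + 1

noncomputable instance (v : {s : Finset (Fin 5) // s.card = 2}) :
    Fintype (petersen.neighborSet v) := (Set.toFinite _).fintype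

noncomputable instance (v : ZMod 12) : Fintype (triplex.neighborSet v) :=
  (Set.toFinite _).fintype

noncomputable instance (v : Fin 4 × ZMod 5) : Fintype (dodecahedral.neighborSet v) :=
  (Set.toFinite _).fintype

/-!
Write `aᵢ = (0, i - 1)` and `bᵢ = (1, i - 1)`. The dodecahedral graph is arc-transitive: it is
connected, the rotation `i ↦ i + 1` moves `a₁` to `a₂`, and the rotation of order 3 about `a₁`
permutes the three neighbours of `a₁`. Since `μ_x^p` and `W₁` are invariant under graph
automorphisms, it suffices to treat the edge `a₁a₂`. The graph is cubic, so `μ_{a₁}^{1/4}` and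
`μ_{a₂}^{1/4}` are uniform on `{a₁, a₂, a₅, b₁}` and `{a₂, a₁, a₃, b₂}`. Moving `a₅` to `a₃` and
`b₁` to `b₂`, each at distance 2, costs 1. Conversely the 1-Lipschitz potential
`f = max(0, 2 - d(·, {a₅, b₁}))` has `∑ f μ_{a₁} - ∑ f μ_{a₂} = 5/4 - 1/4 = 1`, which bounds the
cost of every transport plan from below.
-/

open SimpleGraph Finset

section GraphMetric

variable {W : Type*} {G : SimpleGraph V} {G' : SimpleGraph W}

lemma dist_map_le_of_reachable (f : G →g G') {u v : V} (h : G.Reachable u v) :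
    G'.dist (f u) (f v) ≤ G.dist u v := by
  obtain ⟨w, hw⟩ := h.exists_walk_length_eq_dist
  simpa [hw] using dist_le (w.map f)

lemma dist_iso_apply (e : G ≃g G') (u v : V) : G'.dist (e u) (e v) = G.dist u v := by
  by_cases h : G.Reachable u v
  · refine le_antisymm (dist_map_le_of_reachable e.toHom h) ?_
    have h' : G'.Reachable (e u) (e v) := Iso.reachable_iff.2 h
    simpa using dist_map_le_of_reachable e.symm.toHom h'
  · rw [dist_eq_zero_of_not_reachable h,
      dist_eq_zero_of_not_reachable (mt Iso.reachable_iff.1 h)]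

lemma dist_le_two_of_adj_of_adj {u w v : V} (huw : G.Adj u w) (hwv : G.Adj w v) :
    G.dist u v ≤ 2 :=
  dist_le (.cons huw (.cons hwv .nil))

lemma le_add_dist_of_adj (hG : G.Preconnected) {f : V → ℕ}
    (hf : ∀ u v, G.Adj u v → f u ≤ f v + 1) (u v : V) : f u ≤ f v + G.dist u v := by
  obtain ⟨w, hw⟩ := (hG u v).exists_walk_length_eq_dist
  rw [← hw]
  clear hw
  induction w with
  | nil => simp
  | cons huw _ ih =>
    have := hf _ _ huw
    rw [Walk.length_cons]
    omega

lemma preconnected_of_forall_exists_adj_lt (r : V) (h : V → ℕ)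
    (hr : ∀ v, v ≠ r → ∃ w, G.Adj v w ∧ h w < h v) : G.Preconnected := by
  have hreach (v : V) : G.Reachable v r := by
    induction v using (measure h).wf.induction with
    | _ v ih =>
      by_cases hvr : v = r
      · rw [hvr]
      · obtain ⟨w, hvw, hlt⟩ := hr v hvr
        exact hvw.reachable.trans (ih w hlt)
  exact fun u v => (hreach u).trans (hreach v).symm

lemma exists_iso_apply_eq_of_preconnected (hG : G.Preconnected) {x₀ y₀ : V} (a : G ≃g G)
    (ha : a x₀ = y₀) (hstab : ∀ y, G.Adj x₀ y → ∃ g : G ≃g G, g x₀ = x₀ ∧ g y₀ = y)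
    {x y : V} (hxy : G.Adj x y) : ∃ g : G ≃g G, g x₀ = x ∧ g y₀ = y := by
  have extend {x y : V} (hxy : G.Adj x y) (hx : ∃ g : G ≃g G, g x₀ = x) :
      ∃ g : G ≃g G, g x₀ = x ∧ g y₀ = y := by
    obtain ⟨g, rfl⟩ := hx
    obtain ⟨h, hx₀, hy₀⟩ := hstab (g.symm y) (by simpa using g.symm.map_adj_iff.2 hxy)
    exact ⟨h.trans g, by simp [hx₀], by simp [hy₀]⟩
  have orbit {u v : V} (p : G.Walk u v) (hu : ∃ g : G ≃g G, g x₀ = u) :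
      ∃ g : G ≃g G, g x₀ = v := by
    induction p with
    | nil => exact hu
    | cons huw _ ih =>
      obtain ⟨g, -, hg⟩ := extend huw hu
      exact ih ⟨a.trans g, by simp [ha, hg]⟩
  exact extend hxy (orbit (hG x₀ x).some ⟨Iso.refl, rfl⟩)

end GraphMetric

section Wasserstein

variable {G : SimpleGraph V} {μ₁ μ₂ : V → ℝ≥0∞}

variable (G) in
noncomputable def transportCost (π : V → V → ℝ≥0∞) : ℝ≥0∞ :=
  ∑' q : V × V, (G.dist q.1 q.2 : ℝ≥0∞) * π q.1 q.2

lemma W1_le_transportCost {π : V → V → ℝ≥0∞} (hπ : IsTransportPlan μ₁ μ₂ π) :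
    W1 G μ₁ μ₂ ≤ transportCost G π :=
  iInf_le (fun π : {π // IsTransportPlan μ₁ μ₂ π} => transportCost G π.1) ⟨π, hπ⟩

lemma IsTransportPlan.comp_equiv {π : V → V → ℝ≥0∞} (hπ : IsTransportPlan μ₁ μ₂ π)
    (e : V ≃ V) : IsTransportPlan (μ₁ ∘ e) (μ₂ ∘ e) (fun u v => π (e u) (e v)) :=
  ⟨fun _ _ => hπ.1 _ _, fun u => (e.tsum_eq (π (e u))).trans (hπ.2.1 (e u)),
    fun v => (e.tsum_eq (π · (e v))).trans (hπ.2.2 (e v))⟩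

lemma transportCost_comp_iso (e : G ≃g G) (π : V → V → ℝ≥0∞) :
    transportCost G (fun u v => π (e u) (e v)) = transportCost G π := by
  rw [transportCost, transportCost, ← (e.toEquiv.prodCongr e.toEquiv).tsum_eq
    (fun q : V × V => (G.dist q.1 q.2 : ℝ≥0∞) * π q.1 q.2)]
  simp [dist_iso_apply]

lemma W1_comp_iso_le (e : G ≃g G) (μ₁ μ₂ : V → ℝ≥0∞) :
    W1 G (μ₁ ∘ e) (μ₂ ∘ e) ≤ W1 G μ₁ μ₂ :=
  le_iInf fun π => (W1_le_transportCost (π.2.comp_equiv e.toEquiv)).trans_eq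
    (transportCost_comp_iso e π.1)

lemma W1_comp_iso (e : G ≃g G) (μ₁ μ₂ : V → ℝ≥0∞) :
    W1 G (μ₁ ∘ e) (μ₂ ∘ e) = W1 G μ₁ μ₂ := by
  refine le_antisymm (W1_comp_iso_le e μ₁ μ₂) ?_
  simpa [Function.comp_def] using W1_comp_iso_le e.symm (μ₁ ∘ e) (μ₂ ∘ e)

lemma W1_le_tsum_dist_mul_of_perm (T : V ≃ V) (hT : ∀ u, μ₂ (T u) = μ₁ u)
    (hμ₁ : ∀ u, μ₁ u ≤ 1) : W1 G μ₁ μ₂ ≤ ∑' u, (G.dist u (T u) : ℝ≥0∞) * μ₁ u := by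
  classical
  let π : V → V → ℝ≥0∞ := fun u v => if v = T u then μ₁ u else 0
  have hπ : IsTransportPlan μ₁ μ₂ π := by
    refine ⟨fun u v => ?_, fun u => tsum_ite_eq (T u) _, fun v => ?_⟩
    · unfold π; split_ifs <;> simp [hμ₁]
    · rw [tsum_eq_single (T.symm v) fun u hu => if_neg fun h => hu (by simp [h]), if_pos (by simp),
        ← hT, T.apply_symm_apply]
  refine (W1_le_transportCost hπ).trans_eq ?_
  rw [transportCost, ENNReal.tsum_prod']
  refine tsum_congr fun u => ?_
  rw [tsum_eq_single (T u) fun v hv => by simp [π, hv]]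
  simp [π]

lemma tsum_mul_le_transportCost_add {f : V → ℝ≥0∞} (hf : ∀ u v, f u ≤ G.dist u v + f v)
    {π : V → V → ℝ≥0∞} (hπ : IsTransportPlan μ₁ μ₂ π) :
    ∑' u, f u * μ₁ u ≤ transportCost G π + ∑' v, f v * μ₂ v := by
  obtain ⟨-, hrow, hcol⟩ := hπ
  calc ∑' u, f u * μ₁ u = ∑' u, ∑' v, f u * π u v := by simp_rw [ENNReal.tsum_mul_left, hrow]
    _ ≤ ∑' u, ∑' v, ((G.dist u v : ℝ≥0∞) * π u v + f v * π u v) :=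
      ENNReal.tsum_le_tsum fun u => ENNReal.tsum_le_tsum fun v => by
        rw [← add_mul]; exact mul_le_mul_left (hf u v) _
    _ = transportCost G π + ∑' v, f v * μ₂ v := by
      rw [transportCost, ENNReal.tsum_prod']
      simp_rw [ENNReal.tsum_add]
      rw [ENNReal.tsum_comm (f := fun u v => f v * π u v)]
      simp_rw [ENNReal.tsum_mul_left, hcol]

lemma tsum_mul_le_W1_add {f : V → ℝ≥0∞} (hf : ∀ u v, f u ≤ G.dist u v + f v) :
    ∑' u, f u * μ₁ u ≤ W1 G μ₁ μ₂ + ∑' v, f v * μ₂ v := by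
  rw [W1, ENNReal.iInf_add]
  exact le_iInf fun π => tsum_mul_le_transportCost_add hf π.2

end Wasserstein

section Measure

variable {G : SimpleGraph V}

lemma muMeasure_iso_apply [G.LocallyFinite] (e : G ≃g G) (p : ℝ≥0∞) (x z : V) :
    muMeasure G p (e x) (e z) = muMeasure G p x z := by
  classical
  unfold muMeasure
  rw [e.degree_eq]
  exact if_congr e.injective.eq_iff rfl (if_congr e.map_adj_iff rfl rfl)

lemma W1_muMeasure_iso_apply [G.LocallyFinite] (e : G ≃g G) (p : ℝ≥0∞) (x y : V) :
    W1 G (muMeasure G p (e x)) (muMeasure G p (e y)) =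
      W1 G (muMeasure G p x) (muMeasure G p y) := by
  rw [← W1_comp_iso e]
  congr 1 <;> funext z <;> exact muMeasure_iso_apply e p _ z

lemma muMeasure_of_isRegularOfDegree [DecidableEq V] [DecidableRel G.Adj] [G.LocallyFinite]
    {d : ℕ} (hG : G.IsRegularOfDegree d) (x z : V) :
    muMeasure G ((d : ℝ≥0∞) + 1)⁻¹ x z =
      if z = x ∨ G.Adj x z then ((d : ℝ≥0∞) + 1)⁻¹ else 0 := by
  unfold muMeasure
  by_cases hzx : z = x
  · simp [hzx]
  by_cases hxz : G.Adj x z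
  · have hd : d ≠ 0 := by
      rw [← hG x]; exact (G.degree_pos_iff_exists_adj x).2 ⟨z, hxz⟩ |>.ne'
    have hsub : 1 - ((d : ℝ≥0∞) + 1)⁻¹ = d * ((d : ℝ≥0∞) + 1)⁻¹ := by
      refine ENNReal.sub_eq_of_eq_add (by simp) ?_
      rw [← add_one_mul, ENNReal.mul_inv_cancel (by simp) (by simp)]
    rw [if_neg hzx, if_pos hxz, hG x, hsub, if_pos (Or.inr hxz), mul_comm,
      ENNReal.mul_div_cancel_right (by simpa using hd) (by simp)]
  · simp [hzx, hxz]

end Measure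

lemma tsum_natCast_mul_ite {α : Type*} [Fintype α] (f : α → ℕ) (P : α → Prop) [DecidablePred P]
    (c : ℝ≥0∞) :
    ∑' z, (f z : ℝ≥0∞) * (if P z then c else 0) = ((∑ z with P z, f z : ℕ) : ℝ≥0∞) * c := by
  simp [tsum_fintype, Finset.sum_filter, Finset.sum_mul]

section Dodecahedron

instance : DecidableRel dodecahedral.Adj := fun u v =>
  decidable_of_iff' _ (SimpleGraph.fromRel_adj _ u v)

lemma dodecahedral_isRegularOfDegree : dodecahedral.IsRegularOfDegree 3 := by
  have h : ∀ v, #{w | dodecahedral.Adj v w} = 3 := by decide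
  intro v
  rw [← h v, ← card_neighborFinset_eq_degree]
  congr 1
  ext
  simp

lemma dodecahedral_preconnected : dodecahedral.Preconnected :=
  preconnected_of_forall_exists_adj_lt (0, 0) (fun v => v.1.val + min v.2.val (5 - v.2.val))
    (by decide)

def faceRotation : dodecahedral ≃g dodecahedral where
  toEquiv := (Equiv.refl _).prodCongr (Equiv.addRight 1)
  map_rel_iff' := by decide

def vertexRotation : dodecahedral ≃g dodecahedral where
  toEquiv := [(0, 1), (0, 4), (1, 0)].formPerm * [(0, 2), (1, 4), (2, 0)].formPerm *
    [(0, 3), (2, 4), (1, 1)].formPerm * [(1, 2), (2, 3), (3, 0)].formPerm *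
    [(1, 3), (3, 4), (2, 1)].formPerm * [(2, 2), (3, 3), (3, 1)].formPerm
  map_rel_iff' := by decide

lemma exists_iso_fixing_origin_of_adj (y : Fin 4 × ZMod 5) (hy : dodecahedral.Adj (0, 0) y) :
    ∃ g : dodecahedral ≃g dodecahedral, g (0, 0) = (0, 0) ∧ g (0, 1) = y := by
  have hnbr : ∀ y, dodecahedral.Adj (0, 0) y →
      y = (0, 1) ∨ y = vertexRotation (0, 1) ∨ y = vertexRotation (vertexRotation (0, 1)) := by
    decide
  rcases hnbr y hy with rfl | rfl | rfl
  · exact ⟨Iso.refl, rfl, rfl⟩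
  · exact ⟨vertexRotation, by decide, rfl⟩
  · exact ⟨vertexRotation.trans vertexRotation, by decide, rfl⟩

lemma dodecahedral_exists_iso {x y : Fin 4 × ZMod 5} (hxy : dodecahedral.Adj x y) :
    ∃ g : dodecahedral ≃g dodecahedral, g (0, 0) = x ∧ g (0, 1) = y :=
  exists_iso_apply_eq_of_preconnected dodecahedral_preconnected faceRotation (by decide)
    exists_iso_fixing_origin_of_adj hxy

lemma muMeasure_dodecahedral (x z : Fin 4 × ZMod 5) :
    muMeasure dodecahedral (1/4) x z = if z = x ∨ dodecahedral.Adj x z then 4⁻¹ else 0 := by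
  have h := muMeasure_of_isRegularOfDegree dodecahedral_isRegularOfDegree x z
  norm_num at h
  rw [one_div, h]

lemma W1_muMeasure_dodecahedral_le :
    W1 dodecahedral (muMeasure dodecahedral (1/4) (0, 0))
      (muMeasure dodecahedral (1/4) (0, 1)) ≤ 1 := by
  let T : Equiv.Perm (Fin 4 × ZMod 5) := Equiv.swap (0, 4) (0, 2) * Equiv.swap (1, 0) (1, 1)
  have hT : ∀ u,
      muMeasure dodecahedral (1/4) (0, 1) (T u) = muMeasure dodecahedral (1/4) (0, 0) u := by
    have : ∀ u, (T u = (0, 1) ∨ dodecahedral.Adj (0, 1) (T u)) ↔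
        (u = (0, 0) ∨ dodecahedral.Adj (0, 0) u) := by decide
    intro u
    simp only [muMeasure_dodecahedral, this]
  have hdist : ∀ u, dodecahedral.dist u (T u) ≤ if T u = u then 0 else 2 := by
    have : ∀ u, T u ≠ u → ∃ w, dodecahedral.Adj u w ∧ dodecahedral.Adj w (T u) := by decide
    intro u
    split_ifs with h
    · rw [h, dist_self]
    · obtain ⟨w, huw, hwT⟩ := this u h
      exact dist_le_two_of_adj_of_adj huw hwT
  have hsum :
      ∑ u with u = (0, 0) ∨ dodecahedral.Adj (0, 0) u, (if T u = u then 0 else 2) = 4 := by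
    decide
  calc _ ≤ ∑' u, (dodecahedral.dist u (T u) : ℝ≥0∞) * muMeasure dodecahedral (1/4) (0, 0) u :=
        W1_le_tsum_dist_mul_of_perm T hT fun u => by
          rw [muMeasure_dodecahedral]; split_ifs <;> norm_num
    _ ≤ ∑' u, ((if T u = u then 0 else 2 : ℕ) : ℝ≥0∞) * muMeasure dodecahedral (1/4) (0, 0) u :=
        ENNReal.tsum_le_tsum fun u => by gcongr; exact_mod_cast hdist u
    _ = 1 := by
        simp only [muMeasure_dodecahedral, tsum_natCast_mul_ite, hsum]
        exact ENNReal.mul_inv_cancel (by norm_num) (by norm_num)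

def edgePotential (v : Fin 4 × ZMod 5) : ℕ :=
  if v ∈ ({(0, 4), (1, 0)} : Finset _) then 2
  else if v ∈ ({(0, 0), (0, 3), (1, 4), (2, 0), (2, 4)} : Finset _) then 1 else 0

lemma one_le_W1_muMeasure_dodecahedral :
    1 ≤ W1 dodecahedral (muMeasure dodecahedral (1/4) (0, 0))
      (muMeasure dodecahedral (1/4) (0, 1)) := by
  have hlip : ∀ u v, (edgePotential u : ℝ≥0∞) ≤ dodecahedral.dist u v + edgePotential v :=
      fun u v => by
    rw [add_comm]
    exact_mod_cast le_add_dist_of_adj dodecahedral_preconnected (by decide) u v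
  have h := tsum_mul_le_W1_add (μ₁ := muMeasure dodecahedral (1/4) (0, 0))
    (μ₂ := muMeasure dodecahedral (1/4) (0, 1)) hlip
  have h₁ : ∑ z with z = (0, 0) ∨ dodecahedral.Adj (0, 0) z, edgePotential z = 5 := by decide
  have h₂ : ∑ z with z = (0, 1) ∨ dodecahedral.Adj (0, 1) z, edgePotential z = 1 := by decide
  simp only [muMeasure_dodecahedral, tsum_natCast_mul_ite, h₁, h₂] at h
  refine (ENNReal.add_le_add_iff_right (by norm_num : ((1 : ℕ) : ℝ≥0∞) * 4⁻¹ ≠ ⊤)).1 ?_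
  calc 1 + ((1 : ℕ) : ℝ≥0∞) * 4⁻¹ = ((5 : ℕ) : ℝ≥0∞) * 4⁻¹ := by
        rw [show ((5 : ℕ) : ℝ≥0∞) = 4 + 1 by norm_num, add_mul,
          ENNReal.mul_inv_cancel (by norm_num) (by norm_num), Nat.cast_one]
    _ ≤ _ := h

end Dodecahedron

theorem dodecahedral_ricciFlat (x y : Fin 4 × ZMod 5) (hxy : dodecahedral.Adj x y) :
    W1 dodecahedral (muMeasure dodecahedral (1/4) x) (muMeasure dodecahedral (1/4) y) = 1 := by
  obtain ⟨g, rfl, rfl⟩ := dodecahedral_exists_iso hxy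
  rw [W1_muMeasure_iso_apply]
  exact le_antisymm W1_muMeasure_dodecahedral_le one_le_W1_muMeasure_dodecahedral

end RicciFlatCubic
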